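/- arXiv:1712.02426 — 3 statements merged into one kernel-verified Lean document; each statement's English description precedes it below -/
import Mathlib

section
/- Let ã be a standard Gaussian random variable. Then for any τ ≥ 0, E[ã² | ã² ≤ τ] ≤ τ/3. -/
/-!
The standard Gaussian density `w` is a nonincreasing function of `x ^ 2`. With `m ^ 2 = s ^ 2 / 3`,
the mean of `x ^ 2` for the uniform law on `[-s, s]`, the factors `w x - w m` and `x ^ 2 - m ^ 2`
have opposite signs, so `∫_{-s}^{s} (x ^ 2 - m ^ 2) w x dx ≤ w m ∫_{-s}^{s} (x ^ 2 - m ^ 2) dx = 0`.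
-/

open MeasureTheory ProbabilityTheory Real

/-- Conditional expectation of `f` given the event `S`. -/
noncomputable def condExpOn (μ : Measure ℝ) (S : Set ℝ) (f : ℝ → ℝ) : ℝ :=
  (∫ x in S, f x ∂μ) / (μ S).toReal

theorem integral_Icc_sq_sub_third (s : ℝ) (hs : 0 ≤ s) :
    ∫ x in Set.Icc (-s) s, (x ^ 2 - s ^ 2 / 3) = 0 := by
  rw [integral_Icc_eq_integral_Ioc, ← intervalIntegral.integral_of_le (by linarith),
    intervalIntegral.integral_sub ((continuous_pow 2).intervalIntegrable _ _)
      intervalIntegrable_const, integral_pow, intervalIntegral.integral_const, smul_eq_mul]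
  ring

theorem setIntegral_Icc_mul_sq_le {w : ℝ → ℝ} (hw : ∀ x y, x ^ 2 ≤ y ^ 2 → w y ≤ w x)
    {s : ℝ} (hs : 0 ≤ s) (hint : IntegrableOn w (Set.Icc (-s) s)) :
    ∫ x in Set.Icc (-s) s, w x * x ^ 2 ≤ s ^ 2 / 3 * ∫ x in Set.Icc (-s) s, w x := by
  set m := s / √3
  have hm : m ^ 2 = s ^ 2 / 3 := by simp [m, div_pow]
  have hpointwise : ∀ x, w x * x ^ 2 - s ^ 2 / 3 * w x ≤ w m * (x ^ 2 - s ^ 2 / 3) := by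
    intro x
    rcases le_total (x ^ 2) (m ^ 2) with h | h
    · nlinarith [hw x m h]
    · nlinarith [hw m x h]
  have hint_sq : IntegrableOn (fun x => w x * x ^ 2) (Set.Icc (-s) s) :=
    hint.mul_continuousOn (by fun_prop) isCompact_Icc
  have hint_poly : IntegrableOn (fun x : ℝ => x ^ 2 - s ^ 2 / 3) (Set.Icc (-s) s) :=
    (by fun_prop : Continuous fun x : ℝ => x ^ 2 - s ^ 2 / 3).integrableOn_Icc
  refine sub_nonpos.mp ?_
  calc
    (∫ x in Set.Icc (-s) s, w x * x ^ 2) - s ^ 2 / 3 * ∫ x in Set.Icc (-s) s, w x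
        = ∫ x in Set.Icc (-s) s, (w x * x ^ 2 - s ^ 2 / 3 * w x) := by
          rw [integral_sub hint_sq (hint.const_mul _), integral_const_mul]
      _ ≤ ∫ x in Set.Icc (-s) s, w m * (x ^ 2 - s ^ 2 / 3) :=
          setIntegral_mono_on (hint_sq.sub (hint.const_mul _)) (hint_poly.const_mul _)
            measurableSet_Icc fun x _ => hpointwise x
      _ = 0 := by rw [integral_const_mul, integral_Icc_sq_sub_third s hs, mul_zero]

theorem setIntegral_withDensity_ofReal {X : Type*} [MeasurableSpace X] {μ : Measure X}
    {w : X → ℝ} (hw : Measurable w) (hw0 : ∀ x, 0 ≤ w x) (g : X → ℝ) {S : Set X}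
    (hS : MeasurableSet S) :
    ∫ x in S, g x ∂μ.withDensity (fun x => ENNReal.ofReal (w x)) = ∫ x in S, w x * g x ∂μ := by
  rw [setIntegral_withDensity_eq_setIntegral_toReal_smul hw.ennreal_ofReal
    (ae_of_all _ fun _ => ENNReal.ofReal_lt_top) g hS]
  simp only [ENNReal.toReal_ofReal (hw0 _), smul_eq_mul]

theorem condExpOn_withDensity_sq_le {w : ℝ → ℝ} (hmeas : Measurable w) (hw0 : ∀ x, 0 ≤ w x)
    (hw : ∀ x y, x ^ 2 ≤ y ^ 2 → w y ≤ w x) (hint : Integrable w) {τ : ℝ} (hτ : 0 ≤ τ) :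
    condExpOn (volume.withDensity fun x => ENNReal.ofReal (w x)) {a | a ^ 2 ≤ τ}
      (fun a => a ^ 2) ≤ τ / 3 := by
  have hS : {a : ℝ | a ^ 2 ≤ τ} = Set.Icc (-√τ) √τ := by ext; exact Real.sq_le hτ
  have hden : ((volume.withDensity fun x => ENNReal.ofReal (w x)) (Set.Icc (-√τ) √τ)).toReal
      = ∫ x in Set.Icc (-√τ) √τ, w x := by
    rw [withDensity_apply _ measurableSet_Icc,
      ← ofReal_integral_eq_lintegral_ofReal hint.integrableOn (ae_of_all _ hw0),
      ENNReal.toReal_ofReal (setIntegral_nonneg measurableSet_Icc fun x _ => hw0 x)]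
  rw [condExpOn, hS, hden, setIntegral_withDensity_ofReal hmeas hw0 _ measurableSet_Icc]
  refine div_le_of_le_mul₀ (setIntegral_nonneg measurableSet_Icc fun x _ => hw0 x)
    (by positivity) ?_
  simpa only [sq_sqrt hτ] using
    setIntegral_Icc_mul_sq_le hw (sqrt_nonneg τ) hint.integrableOn

theorem gaussianPDFReal_zero_le_of_sq_le (v : NNReal) {x y : ℝ} (h : x ^ 2 ≤ y ^ 2) :
    gaussianPDFReal 0 v y ≤ gaussianPDFReal 0 v x := by
  simp only [gaussianPDFReal, sub_zero]
  gcongr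

/-- for a standard Gaussian `ã` and any `τ ≥ 0`, `E[ã² | ã² ≤ τ] ≤ τ/3`. -/
theorem stmt2 (τ : ℝ) (hτ : 0 ≤ τ) :
    condExpOn (gaussianReal 0 1) {a : ℝ | a ^ 2 ≤ τ} (fun a => a ^ 2) ≤ τ / 3 := by
  rw [gaussianReal_of_var_ne_zero 0 one_ne_zero]
  exact condExpOn_withDensity_sq_le (measurable_gaussianPDFReal 0 1) (gaussianPDFReal_nonneg 0 1)
    (fun _ _ => gaussianPDFReal_zero_le_of_sq_le 1) (integrable_gaussianPDFReal 0 1) hτ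
end

section
/- Let X and Δ be symmetric n×n real matrices and set Z := X + Δ. Let u₁ and v₁ be unit principal eigenvectors (eigenvectors for the largest eigenvalue) of X and Z respectively, and suppose λ₁(X) > λ₂(X). Then √(1 − ⟨u₁, v₁⟩²) ≤ 2‖Δ‖₂ / (λ₁(X) − λ₂(X)). -/
/-!
Write `v₁ = c • u₁ + p` with `c = ⟨u₁, v₁⟩` and `p ⟂ u₁`, so that `‖p‖² = 1 - c² = sin² θ`.
Pairing the eigen-equation `(X + Δ) v₁ = μ v₁` with `p` gives
`μ ‖p‖² - ⟨p, Δ v₁⟩ = ⟨p, X p⟩ ≤ λ₂ ‖p‖²`; the last bound holds because the deflated matrix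
`X - (λ₁ - λ₂) u₁ u₁ᵀ` has all its eigenvalues at most `λ₂`. Since also
`μ ≥ ⟨u₁, (X + Δ) u₁⟩ ≥ λ₁ - ‖Δ‖`, we get `(λ₁ - λ₂ - ‖Δ‖) sin² θ ≤ ‖Δ‖ sin θ`, and `sin θ ≤ 1`
turns this into `sin θ ≤ 2 ‖Δ‖ / (λ₁ - λ₂)`.
-/

open Matrix

/-- Euclidean norm of a vector in `ℝⁿ`. -/
noncomputable def vnorm {n : ℕ} (v : Fin n → ℝ) : ℝ := Real.sqrt (∑ i, v i ^ 2)

/-- Spectral (ℓ₂ operator) norm of a square matrix. -/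
noncomputable def specNorm {n : ℕ} (A : Matrix (Fin n) (Fin n) ℝ) : ℝ :=
  sSup {x : ℝ | ∃ v : Fin n → ℝ, vnorm v = 1 ∧ x = vnorm (A.mulVec v)}

theorem vnorm_eq_norm_toLp {n : ℕ} (v : Fin n → ℝ) : vnorm v = ‖WithLp.toLp 2 v‖ := by
  simp [vnorm, EuclideanSpace.norm_eq]

theorem vnorm_eq_sqrt_dotProduct {n : ℕ} (v : Fin n → ℝ) : vnorm v = √(v ⬝ᵥ v) := by
  simp [vnorm, dotProduct, sq]

theorem dotProduct_self_eq_one_of_vnorm_eq_one {n : ℕ} {v : Fin n → ℝ} (hv : vnorm v = 1) :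
    v ⬝ᵥ v = 1 := by
  rwa [vnorm_eq_sqrt_dotProduct, Real.sqrt_eq_one] at hv

theorem dotProduct_le_vnorm_mul_vnorm {n : ℕ} (u v : Fin n → ℝ) : u ⬝ᵥ v ≤ vnorm u * vnorm v :=
  Real.sum_mul_le_sqrt_mul_sqrt _ u v

theorem vnorm_mulVec_le_specNorm {n : ℕ} (A : Matrix (Fin n) (Fin n) ℝ) {v : Fin n → ℝ}
    (hv : vnorm v = 1) : vnorm (A *ᵥ v) ≤ specNorm A := by
  refine le_csSup ⟨‖toEuclideanCLM (𝕜 := ℝ) A‖, ?_⟩ ⟨v, hv, rfl⟩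
  rintro _ ⟨w, hw, rfl⟩
  rw [vnorm_eq_norm_toLp] at hw ⊢
  simpa [hw] using (toEuclideanCLM (𝕜 := ℝ) A).le_opNorm (WithLp.toLp 2 w)

theorem Matrix.IsSymm.dotProduct_mulVec_le {n : Type*} [Fintype n] [DecidableEq n]
    {A : Matrix n n ℝ} (hA : A.IsSymm) {m : ℝ}
    (hm : ∀ (l : ℝ) (v : n → ℝ), v ≠ 0 → A *ᵥ v = l • v → l ≤ m) (v : n → ℝ) :
    v ⬝ᵥ A *ᵥ v ≤ m * (v ⬝ᵥ v) := by
  have hB : (m • 1 - A).IsHermitian := isHermitian_iff_isSymm.mpr ((isSymm_one.smul m).sub hA)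
  have hpsd : (m • (1 : Matrix n n ℝ) - A).PosSemidef := by
    refine hB.posSemidef_iff_eigenvalues_nonneg.mpr fun i => ?_
    have hb := hB.mulVec_eigenvectorBasis i
    rw [sub_mulVec, smul_mulVec, one_mulVec] at hb
    have := hm (m - hB.eigenvalues i) _
      (mt (WithLp.ofLp_eq_zero 2).mp (hB.eigenvectorBasis.orthonormal.ne_zero i))
      (by rw [sub_smul, ← hb]; abel)
    simpa using this
  simpa [sub_mulVec, smul_mulVec, dotProduct_sub, dotProduct_smul] using
    hpsd.dotProduct_mulVec_nonneg v

theorem Matrix.IsSymm.dotProduct_mulVec_comm {n : Type*} [Fintype n] {A : Matrix n n ℝ}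
    (hA : A.IsSymm) (u v : n → ℝ) : u ⬝ᵥ A *ᵥ v = v ⬝ᵥ A *ᵥ u := by
  rw [dotProduct_mulVec, ← mulVec_transpose, hA.eq, dotProduct_comm]

section Deflation

variable {n : Type*} [Fintype n] {X : Matrix n n ℝ} {u : n → ℝ} {l1 l2 : ℝ}

theorem Matrix.IsSymm.eigenvalue_deflation_le (hX : X.IsSymm) (hu : u ⬝ᵥ u = 1)
    (hXu : X *ᵥ u = l1 • u)
    (hl2 : ∀ (l : ℝ) (v : n → ℝ), v ≠ 0 → v ⬝ᵥ u = 0 → X *ᵥ v = l • v → l ≤ l2)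
    (l : ℝ) (v : n → ℝ) (hv : v ≠ 0)
    (hev : (X - (l1 - l2) • vecMulVec u u) *ᵥ v = l • v) : l ≤ l2 := by
  rw [sub_mulVec, smul_mulVec, vecMulVec_mulVec, op_smul_eq_smul, smul_smul,
    sub_eq_iff_eq_add] at hev
  by_cases hvu : v ⬝ᵥ u = 0
  · rw [dotProduct_comm, hvu, mul_zero, zero_smul, add_zero] at hev
    exact hl2 l v hv hvu hev
  · have hcomm := hX.dotProduct_mulVec_comm u v
    rw [hXu, hev] at hcomm
    simp only [dotProduct_add, dotProduct_smul, smul_eq_mul, hu, dotProduct_comm u v] at hcomm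
    have : (l - l2) * (v ⬝ᵥ u) = 0 := by linarith
    linarith [sub_eq_zero.mp ((mul_eq_zero.mp this).resolve_right hvu)]

theorem Matrix.IsSymm.dotProduct_mulVec_le_of_orthogonal [DecidableEq n] (hX : X.IsSymm)
    (hu : u ⬝ᵥ u = 1) (hXu : X *ᵥ u = l1 • u)
    (hl2 : ∀ (l : ℝ) (v : n → ℝ), v ≠ 0 → v ⬝ᵥ u = 0 → X *ᵥ v = l • v → l ≤ l2)
    {p : n → ℝ} (hp : u ⬝ᵥ p = 0) : p ⬝ᵥ X *ᵥ p ≤ l2 * (p ⬝ᵥ p) := by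
  have hsymm : (X - (l1 - l2) • vecMulVec u u).IsSymm :=
    hX.sub (IsSymm.smul (transpose_vecMulVec u u) _)
  simpa [sub_mulVec, smul_mulVec, vecMulVec_mulVec, hp] using
    hsymm.dotProduct_mulVec_le (hX.eigenvalue_deflation_le hu hXu hl2) p

end Deflation

theorem sub_specNorm_le_of_isSymm_add {n : ℕ} {X Δ : Matrix (Fin n) (Fin n) ℝ}
    (hZ : (X + Δ).IsSymm) {mz : ℝ}
    (hmz : ∀ (l : ℝ) (v : Fin n → ℝ), v ≠ 0 → (X + Δ) *ᵥ v = l • v → l ≤ mz)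
    {u : Fin n → ℝ} {l1 : ℝ} (hu : vnorm u = 1) (hXu : X *ᵥ u = l1 • u) :
    l1 - specNorm Δ ≤ mz := by
  have huu := dotProduct_self_eq_one_of_vnorm_eq_one hu
  have hrayleigh := hZ.dotProduct_mulVec_le hmz u
  have hcs : -(u ⬝ᵥ Δ *ᵥ u) ≤ specNorm Δ := by
    calc -(u ⬝ᵥ Δ *ᵥ u) = -u ⬝ᵥ Δ *ᵥ u := (neg_dotProduct _ _).symm
      _ ≤ vnorm (-u) * vnorm (Δ *ᵥ u) := dotProduct_le_vnorm_mul_vnorm _ _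
      _ ≤ specNorm Δ := by
        rw [vnorm_eq_sqrt_dotProduct (-u), neg_dotProduct_neg, huu, Real.sqrt_one, one_mul]
        exact vnorm_mulVec_le_specNorm Δ hu
  rw [add_mulVec, dotProduct_add, hXu, dotProduct_smul, huu] at hrayleigh
  simp only [smul_eq_mul, mul_one] at hrayleigh
  linarith

theorem sub_mul_sqrt_sq_le_sqrt_mul_specNorm {n : ℕ} {X Δ : Matrix (Fin n) (Fin n) ℝ} (hX : X.IsSymm)
    {u v : Fin n → ℝ} {l1 l2 mz : ℝ} (hu : u ⬝ᵥ u = 1) (hXu : X *ᵥ u = l1 • u)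
    (hl2 : ∀ (l : ℝ) (w : Fin n → ℝ), w ≠ 0 → w ⬝ᵥ u = 0 → X *ᵥ w = l • w → l ≤ l2)
    (hv : vnorm v = 1) (hZv : (X + Δ) *ᵥ v = mz • v) :
    (mz - l2) * √(1 - (u ⬝ᵥ v) ^ 2) ^ 2 ≤ √(1 - (u ⬝ᵥ v) ^ 2) * specNorm Δ := by
  set c := u ⬝ᵥ v
  set p := v - c • u with hp
  have hvv := dotProduct_self_eq_one_of_vnorm_eq_one hv
  have hup : u ⬝ᵥ p = 0 := by simp [p, dotProduct_sub, dotProduct_smul, hu, c]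
  have hpv : p ⬝ᵥ v = 1 - c ^ 2 := by
    simp only [p, sub_dotProduct, smul_dotProduct, hvv, smul_eq_mul]; ring
  have hpp : p ⬝ᵥ p = 1 - c ^ 2 := by
    rw [← hpv]; nth_rewrite 2 [hp]; simp [dotProduct_sub, dotProduct_smul, dotProduct_comm p u, hup]
  have hpXv : p ⬝ᵥ X *ᵥ v = p ⬝ᵥ X *ᵥ p := by
    rw [show v = p + c • u by simp [p], mulVec_add, mulVec_smul, hXu, dotProduct_add]
    simp [dotProduct_smul, dotProduct_comm p u, hup]
  have hpZv : p ⬝ᵥ X *ᵥ v = mz * (1 - c ^ 2) - p ⬝ᵥ Δ *ᵥ v := by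
    rw [← hpv, ← smul_eq_mul, ← dotProduct_smul, ← hZv, add_mulVec, dotProduct_add]; ring
  have hupper := hX.dotProduct_mulVec_le_of_orthogonal hu hXu hl2 hup
  have hcs : p ⬝ᵥ Δ *ᵥ v ≤ √(1 - c ^ 2) * specNorm Δ :=
    calc p ⬝ᵥ Δ *ᵥ v ≤ vnorm p * vnorm (Δ *ᵥ v) := dotProduct_le_vnorm_mul_vnorm _ _
      _ ≤ √(1 - c ^ 2) * specNorm Δ := by
        rw [vnorm_eq_sqrt_dotProduct p, hpp]
        exact mul_le_mul_of_nonneg_left (vnorm_mulVec_le_specNorm Δ hv) (Real.sqrt_nonneg _)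
  rw [hpp] at hupper
  rw [Real.sq_sqrt (hpp ▸ Finset.sum_nonneg fun i _ => mul_self_nonneg (p i))]
  linarith

theorem le_two_mul_div_of_sub_mul_sq_le {g D s : ℝ} (hg : 0 < g) (hD : 0 ≤ D) (hs0 : 0 ≤ s)
    (hs1 : s ≤ 1) (h : (g - D) * s ^ 2 ≤ s * D) : s ≤ 2 * D / g := by
  rw [le_div_iff₀ hg]
  rcases hs0.eq_or_lt with rfl | hs
  · linarith
  · have hDs : D * s ^ 2 ≤ D * s := mul_le_mul_of_nonneg_left (by nlinarith) hD
    exact le_of_mul_le_mul_left (by nlinarith) hs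

theorem stmt5_general (n : ℕ) (X Δ : Matrix (Fin n) (Fin n) ℝ)
    (hX : X.IsSymm) (hΔ : Δ.IsSymm)
    (l1 l2 mz : ℝ) (hgap : l2 < l1)
    (u1 v1 : Fin n → ℝ) (hu1 : vnorm u1 = 1) (hv1 : vnorm v1 = 1)
    (hXu : X.mulVec u1 = l1 • u1)
    (hl2 : ∀ (l : ℝ) (v : Fin n → ℝ), v ≠ 0 → (∑ i, v i * u1 i) = 0 →
        X.mulVec v = l • v → l ≤ l2)
    (hZv : (X + Δ).mulVec v1 = mz • v1)
    (hmz : ∀ (l : ℝ) (v : Fin n → ℝ), v ≠ 0 → (X + Δ).mulVec v = l • v → l ≤ mz) :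
    Real.sqrt (1 - (∑ i, u1 i * v1 i) ^ 2) ≤ 2 * specNorm Δ / (l1 - l2) := by
  have hD : 0 ≤ specNorm Δ := (Real.sqrt_nonneg _).trans (vnorm_mulVec_le_specNorm Δ hu1)
  have hweyl : l1 - specNorm Δ ≤ mz := sub_specNorm_le_of_isSymm_add (hX.add hΔ) hmz hu1 hXu
  have hkey :=
    sub_mul_sqrt_sq_le_sqrt_mul_specNorm hX (dotProduct_self_eq_one_of_vnorm_eq_one hu1) hXu hl2 hv1 hZv
  refine le_two_mul_div_of_sub_mul_sq_le (sub_pos.mpr hgap) hD (Real.sqrt_nonneg _)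
    (Real.sqrt_le_one.mpr (sub_le_self _ (sq_nonneg _))) (le_trans ?_ hkey)
  exact mul_le_mul_of_nonneg_right (by linarith) (sq_nonneg _)

/-- Davis–Kahan / Yu–Wang–Samworth: for symmetric `X`, `Δ` with `Z = X + Δ`,
unit principal eigenvectors `u₁` of `X` and `v₁` of `Z`, and `λ₁(X) > λ₂(X)`,
`√(1 − ⟨u₁,v₁⟩²) ≤ 2‖Δ‖₂ / (λ₁(X) − λ₂(X))`. -/
theorem stmt5 (n : ℕ) (X Δ : Matrix (Fin n) (Fin n) ℝ)
    (hX : X.IsSymm) (hΔ : Δ.IsSymm)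
    (l1 l2 mz : ℝ) (hgap : l2 < l1)
    (u1 v1 : Fin n → ℝ) (hu1 : vnorm u1 = 1) (hv1 : vnorm v1 = 1)
    (hXu : X.mulVec u1 = l1 • u1)
    (hl1max : ∀ (l : ℝ) (v : Fin n → ℝ), v ≠ 0 → X.mulVec v = l • v → l ≤ l1)
    (hl2 : ∀ (l : ℝ) (v : Fin n → ℝ), v ≠ 0 → (∑ i, v i * u1 i) = 0 →
        X.mulVec v = l • v → l ≤ l2)
    (hZv : (X + Δ).mulVec v1 = mz • v1)
    (hmz : ∀ (l : ℝ) (v : Fin n → ℝ), v ≠ 0 → (X + Δ).mulVec v = l • v → l ≤ mz) :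
    Real.sqrt (1 - (∑ i, u1 i * v1 i) ^ 2) ≤ 2 * specNorm Δ / (l1 - l2) :=
  stmt5_general n X Δ hX hΔ l1 l2 mz hgap u1 v1 hu1 hv1 hXu hl2 hZv hmz
end

section
/- Let a ∼ N(0, I_n), let x ∈ R^n, and for a fixed index set B_b ⊆ {1,…,n} of cardinality B, let x_b denote the restriction of x to B_b. Then E[ Σ_{j∈B_b} (aᵀx)⁴ a_j⁴ ] = 9B‖x‖₂⁴ + 24 Σ_{j∈B_b} x_j⁴ + 72‖x_b‖₂²‖x‖₂². -/
/-! Write `aᵀx = x_j a_j + Y_j` with `Y_j = ∑_{i ≠ j} x_i a_i`. Splitting off the `j`-th factor of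
the product measure makes `a_j` and `Y_j` independent, and `Y_j ∼ N(0, ‖x‖² - x_j²)` because the
standard Gaussian on `ℝⁿ` is rotation invariant. Expanding `(x_j a_j + Y_j)⁴ a_j⁴` binomially then
reduces everything to the one-dimensional moments `E[g^(2k)] = (2k-1)‼ v^k` of `N(0, v)`, which
follow from Gaussian integration by parts. -/

open MeasureTheory ProbabilityTheory Real WithLp Finset
open scoped NNReal Nat

namespace ProbabilityTheory

lemma integrable_pow_gaussianReal (μ : ℝ) (v : ℝ≥0) (k : ℕ) :
    Integrable (fun x : ℝ => x ^ k) (gaussianReal μ v) :=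
  integrable_pow_of_mem_interior_integrableExpSet (by simp) k

lemma hasDerivAt_gaussianPDFReal_zero (v : ℝ≥0) (x : ℝ) :
    HasDerivAt (gaussianPDFReal 0 v) (-(x / v) * gaussianPDFReal 0 v x) x := by
  have hexp : HasDerivAt (fun y : ℝ => -y ^ 2 / (2 * v)) (-(x / v)) x :=
    ((hasDerivAt_pow 2 x).fun_neg.div_const (2 * (v : ℝ))).congr_deriv (by push_cast; ring)
  have hpdf : gaussianPDFReal 0 v = fun y => (√(2 * π * v))⁻¹ * rexp (-y ^ 2 / (2 * v)) := by
    simp [gaussianPDFReal_def]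
  rw [hpdf]
  exact (hexp.exp.const_mul _).congr_deriv (by ring)

lemma integrable_gaussianPDFReal_smul_pow (μ : ℝ) {v : ℝ≥0} (hv : v ≠ 0) (k : ℕ) :
    Integrable (fun x => gaussianPDFReal μ v x • x ^ k) := by
  have h := integrable_pow_gaussianReal μ v k
  rwa [gaussianReal_of_var_ne_zero μ hv, integrable_withDensity_iff_integrable_smul'
    (measurable_gaussianPDF μ v) (ae_of_all _ fun _ => gaussianPDF_lt_top),
    funext fun x => congrArg (· • x ^ k) (toReal_gaussianPDF (μ := μ) (v := v) x)] at h

lemma integral_pow_add_two_gaussianReal (v : ℝ≥0) (k : ℕ) :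
    ∫ x, x ^ (k + 2) ∂gaussianReal 0 v = (k + 1) * v * ∫ x, x ^ k ∂gaussianReal 0 v := by
  rcases eq_or_ne v 0 with rfl | hv
  · simp [gaussianReal_zero_var]
  simp only [integral_gaussianReal_eq_integral_smul hv]
  have hintegrable := integrable_gaussianPDFReal_smul_pow 0 hv
  simp only [smul_eq_mul] at hintegrable ⊢
  have hibp := integral_mul_deriv_eq_deriv_mul_of_integrable
    (u := fun x : ℝ => x ^ (k + 1)) (u' := fun x => (k + 1 : ℕ) * x ^ k)
    (v := gaussianPDFReal 0 v) (v' := fun x => -(x / v) * gaussianPDFReal 0 v x)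
    (fun x _ => by simpa using hasDerivAt_pow (k + 1) x)
    (fun x _ => hasDerivAt_gaussianPDFReal_zero v x)
    (((hintegrable (k + 2)).const_mul (-(v : ℝ)⁻¹)).congr (ae_of_all _ fun x => by
      simp only [Pi.mul_apply]; ring))
    (((hintegrable k).const_mul (k + 1 : ℝ)).congr (ae_of_all _ fun x => by
      simp only [Pi.mul_apply]; push_cast; ring))
    ((hintegrable (k + 1)).congr (ae_of_all _ fun x => by simp only [Pi.mul_apply]; ring))
  have hlhs : ∫ x, x ^ (k + 1) * (-(x / v) * gaussianPDFReal 0 v x) =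
      -(v : ℝ)⁻¹ * ∫ x, gaussianPDFReal 0 v x * x ^ (k + 2) := by
    rw [← integral_const_mul]; congr 1; ext x; ring
  have hrhs : ∫ x, ((k + 1 : ℕ) : ℝ) * x ^ k * gaussianPDFReal 0 v x =
      (k + 1) * ∫ x, gaussianPDFReal 0 v x * x ^ k := by
    rw [← integral_const_mul]; congr 1; ext x; push_cast; ring
  rw [hlhs, hrhs] at hibp
  have hv' : (v : ℝ) ≠ 0 := by exact_mod_cast hv
  field_simp at hibp
  linear_combination -hibp

lemma integral_pow_gaussianReal (v : ℝ≥0) (k : ℕ) :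
    ∫ x, x ^ k ∂gaussianReal 0 v = if Even k then ((k - 1)‼ : ℝ) * v ^ (k / 2) else 0 := by
  induction k using Nat.twoStepInduction with
  | zero => simp
  | one => simp
  | more k ih _ =>
    rw [integral_pow_add_two_gaussianReal, ih]
    by_cases hk : Even k
    · have hk2 : (k + 2) / 2 = k / 2 + 1 := by omega
      simp only [hk, Nat.even_add_one, if_true, not_not, hk2, show k + 2 - 1 = k + 1 from rfl,
        Nat.doubleFactorial_add_one]
      push_cast
      ring
    · simp [hk, Nat.even_add]

lemma map_pi_gaussianReal_sum_mul {ι : Type*} [Fintype ι] (c : ι → ℝ) :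
    (Measure.pi fun _ : ι => gaussianReal 0 1).map (fun a => ∑ i, c i * a i) =
      gaussianReal 0 (∑ i, c i ^ 2).toNNReal := by
  set L : StrongDual ℝ (EuclideanSpace ℝ ι) := innerSL ℝ (toLp 2 c)
  have hL : (fun a : ι → ℝ => ∑ i, c i * a i) = L ∘ toLp 2 := by
    ext a; simp [L, PiLp.inner_apply, mul_comm]
  rw [hL, ← Measure.map_map L.continuous.measurable (by fun_prop), map_pi_eq_stdGaussian,
    IsGaussian.map_eq_gaussianReal, integral_strongDual_stdGaussian, variance_dual_stdGaussian]
  congr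
  simp [L, innerSL_apply_norm, EuclideanSpace.real_norm_sq_eq]

lemma map_pi_gaussianReal_eval_prod_sum_mul_succAbove {m : ℕ} (j : Fin (m + 1))
    (c : Fin m → ℝ) :
    (Measure.pi fun _ : Fin (m + 1) => gaussianReal 0 1).map
        (fun a => (a j, ∑ i, c i * a (j.succAbove i))) =
      (gaussianReal 0 1).prod (gaussianReal 0 (∑ i, c i ^ 2).toNNReal) := by
  have hfac : (fun a : Fin (m + 1) → ℝ => (a j, ∑ i, c i * a (j.succAbove i))) =
      Prod.map id (fun b => ∑ i, c i * b i) ∘ MeasurableEquiv.piFinSuccAbove (fun _ => ℝ) j :=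
    rfl
  rw [hfac, ← Measure.map_map (by fun_prop) (MeasurableEquiv.measurable _),
    (measurePreserving_piFinSuccAbove (fun _ => gaussianReal 0 1) j).map_eq,
    ← Measure.map_prod_map _ _ measurable_id (by fun_prop), Measure.map_id,
    map_pi_gaussianReal_sum_mul]

end ProbabilityTheory

section MixedMoments

variable {μ ν : Measure ℝ}

lemma add_pow_mul_pow_eq_sum (c t y : ℝ) (p q : ℕ) :
    (c * t + y) ^ p * t ^ q =
      ∑ k ∈ range (p + 1), (c ^ k * p.choose k) * (t ^ (k + q) * y ^ (p - k)) := by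
  rw [add_pow, sum_mul]
  refine sum_congr rfl fun k _ => ?_
  ring

lemma integrable_add_pow_mul_pow_prod (hμ : ∀ k : ℕ, Integrable (fun t => t ^ k) μ)
    (hν : ∀ k : ℕ, Integrable (fun y => y ^ k) ν) (c : ℝ) (p q : ℕ) :
    Integrable (fun z : ℝ × ℝ => (c * z.1 + z.2) ^ p * z.1 ^ q) (μ.prod ν) := by
  simp_rw [add_pow_mul_pow_eq_sum]
  exact integrable_finsetSum _ fun k _ => ((hμ _).mul_prod (hν _)).const_mul _

lemma integral_add_pow_mul_pow_prod [SFinite μ] [SFinite ν]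
    (hμ : ∀ k : ℕ, Integrable (fun t => t ^ k) μ) (hν : ∀ k : ℕ, Integrable (fun y => y ^ k) ν)
    (c : ℝ) (p q : ℕ) :
    ∫ z, (c * z.1 + z.2) ^ p * z.1 ^ q ∂(μ.prod ν) =
      ∑ k ∈ range (p + 1),
        (c ^ k * p.choose k) * ((∫ t, t ^ (k + q) ∂μ) * ∫ y, y ^ (p - k) ∂ν) := by
  simp_rw [add_pow_mul_pow_eq_sum]
  rw [integral_finsetSum _ fun k _ => ((hμ _).mul_prod (hν _)).const_mul _]
  refine sum_congr rfl fun k _ => ?_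
  rw [integral_const_mul, ← integral_prod_mul (fun t => t ^ (k + q)) (fun y => y ^ (p - k))]

end MixedMoments

section

variable {m : ℕ} (x : Fin (m + 1) → ℝ) (j : Fin (m + 1))

lemma sum_mul_pow_four_mul_pow_four_eq (a : Fin (m + 1) → ℝ) :
    (∑ i, a i * x i) ^ 4 * a j ^ 4 =
      (x j * a j + ∑ i, x (j.succAbove i) * a (j.succAbove i)) ^ 4 * a j ^ 4 := by
  rw [Fin.sum_univ_succAbove _ j]
  simp only [mul_comm (a _)]

lemma integrable_sum_mul_pow_four_mul_pow_four :
    Integrable (fun a => (∑ i, a i * x i) ^ 4 * a j ^ 4)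
      (Measure.pi fun _ : Fin (m + 1) => gaussianReal 0 1) := by
  have hprod : Integrable (fun z : ℝ × ℝ => (x j * z.1 + z.2) ^ 4 * z.1 ^ 4)
      ((Measure.pi fun _ => gaussianReal 0 1).map
        (fun a : Fin (m + 1) → ℝ => (a j, ∑ i, x (j.succAbove i) * a (j.succAbove i)))) := by
    rw [map_pi_gaussianReal_eval_prod_sum_mul_succAbove]
    exact integrable_add_pow_mul_pow_prod (integrable_pow_gaussianReal 0 1)
      (integrable_pow_gaussianReal 0 _) _ _ _
  simp_rw [sum_mul_pow_four_mul_pow_four_eq x j]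
  exact (integrable_map_measure (by fun_prop) (by fun_prop)).mp hprod

lemma integral_sum_mul_pow_four_mul_pow_four :
    ∫ a, (∑ i, a i * x i) ^ 4 * a j ^ 4 ∂(Measure.pi fun _ : Fin (m + 1) => gaussianReal 0 1) =
      9 * (∑ i, x i ^ 2) ^ 2 + 24 * x j ^ 4 + 72 * (∑ i, x i ^ 2) * x j ^ 2 := by
  have hmap : ∫ z, (x j * z.1 + z.2) ^ 4 * z.1 ^ 4 ∂(Measure.pi fun _ => gaussianReal 0 1).map
        (fun a : Fin (m + 1) → ℝ => (a j, ∑ i, x (j.succAbove i) * a (j.succAbove i))) =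
      ∫ a, (x j * a j + ∑ i, x (j.succAbove i) * a (j.succAbove i)) ^ 4 * a j ^ 4
        ∂(Measure.pi fun _ => gaussianReal 0 1) :=
    integral_map (by fun_prop) (by fun_prop)
  rw [map_pi_gaussianReal_eval_prod_sum_mul_succAbove, integral_add_pow_mul_pow_prod
    (integrable_pow_gaussianReal 0 1) (integrable_pow_gaussianReal 0 _)] at hmap
  simp_rw [sum_mul_pow_four_mul_pow_four_eq x j, ← hmap,
    Fin.sum_univ_succAbove (fun i => x i ^ 2) j]
  simp only [sum_range_succ, sum_range_zero, integral_pow_gaussianReal,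
    Real.coe_toNNReal _ (by positivity : 0 ≤ ∑ i, x (j.succAbove i) ^ 2)]
  norm_num [Nat.doubleFactorial, Nat.even_iff, Nat.choose]
  ring

end

/-- Gaussian moment identity
`E[Σ_{j∈B_b} (aᵀx)⁴ a_j⁴] = 9B‖x‖₂⁴ + 24 Σ_{j∈B_b} x_j⁴ + 72‖x_b‖₂²‖x‖₂²`. -/
theorem stmt6 (n : ℕ) (x : Fin n → ℝ) (Bb : Finset (Fin n)) :
    (∫ a : Fin n → ℝ, ∑ j ∈ Bb, (∑ i, a i * x i) ^ 4 * a j ^ 4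
        ∂(Measure.pi fun _ : Fin n => gaussianReal 0 1)) =
      9 * (Bb.card : ℝ) * (∑ i, x i ^ 2) ^ 2 + 24 * ∑ j ∈ Bb, x j ^ 4 +
        72 * (∑ j ∈ Bb, x j ^ 2) * (∑ i, x i ^ 2) := by
  cases n with
  | zero => simp [Finset.eq_empty_of_isEmpty Bb]
  | succ m =>
    rw [integral_finsetSum _ fun j _ => integrable_sum_mul_pow_four_mul_pow_four x j]
    simp_rw [integral_sum_mul_pow_four_mul_pow_four, sum_add_distrib, sum_const, nsmul_eq_mul,
      ← mul_sum]
    ring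
end
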